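/- For any x ∈ ℝⁿ, the Fréchet subdifferential of the counting function c at x equals X_{I⊥}(x) = {y ∈ ℝⁿ : y_i = 0 whenever x_i ≠ 0}. -/

import Mathlib

open Filter Topology
open scoped InnerProductSpace

/-!
Near `x` the support of `y` can only grow. If `xs` vanishes on the support of `x`, then either
the support of `y` equals that of `x`, so `y - x` is orthogonal to `xs` and the quotient is `0`,
or it is strictly larger, and the jump of at least `1` in `c` dominates the linear term
`⟪xs, y - x⟫ = O(‖y - x‖)`. Conversely, if `xs i ≠ 0` with `x i ≠ 0`, moving `x` along
`v = xs i • e_i` keeps `c` constant, so on that ray the quotient is the negative constant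
`-⟪xs, v⟫ / ‖v‖`; since `c` is locally nondecreasing, the quotient is bounded below by `-‖xs‖`
near `x`, hence its liminf is negative.
-/

section NormedSpace

variable {E : Type*} [NormedAddCommGroup E] [NormedSpace ℝ E]

theorem tendsto_add_smul_nhds (x v : E) :
    Tendsto (fun t : ℝ => x + t • v) (𝓝 0) (𝓝 x) :=
  (by fun_prop : Continuous fun t : ℝ => x + t • v).tendsto' 0 x (by simp)

theorem tendsto_add_smul_nhdsNE (x : E) {v : E} (hv : v ≠ 0) :
    Tendsto (fun t : ℝ => x + t • v) (𝓝[≠] 0) (𝓝[≠] x) := by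
  refine tendsto_nhdsWithin_of_tendsto_nhds_of_eventually_within _
    ((tendsto_add_smul_nhds x v).mono_left nhdsWithin_le_nhds) ?_
  filter_upwards [self_mem_nhdsWithin] with t (ht : t ≠ 0)
  simpa [hv] using ht

end NormedSpace

section InnerProductSpace

variable {E : Type*} [NormedAddCommGroup E] [InnerProductSpace ℝ E]

noncomputable def frechetQuotient (f : E → ℝ) (x xs y : E) : ℝ :=
  (f y - f x - ⟪xs, y - x⟫_ℝ) / ‖y - x‖

theorem frechetQuotient_add_smul {f : E → ℝ} {x v : E} (xs : E) {t : ℝ} (ht : 0 < t)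
    (hf : f (x + t • v) = f x) :
    frechetQuotient f x xs (x + t • v) = -⟪xs, v⟫_ℝ / ‖v‖ := by
  rw [frechetQuotient, hf, add_sub_cancel_left, inner_smul_right, norm_smul,
    Real.norm_of_nonneg ht.le, sub_self, zero_sub, ← mul_neg, mul_div_mul_left _ _ ht.ne']

end InnerProductSpace

/-- In `ℝ` the liminf of a function that is unbounded above along `l` is the junk value
`sSup univ = 0`, so unlike `Filter.le_liminf_of_le` no coboundedness hypothesis is needed. -/
theorem Real.liminf_nonneg_of_eventually_nonneg {β : Type*} {l : Filter β} {u : β → ℝ}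
    (h : ∀ᶠ y in l, 0 ≤ u y) : 0 ≤ liminf u l := by
  rw [liminf_eq]
  by_cases hb : BddAbove {a | ∀ᶠ y in l, a ≤ u y}
  · exact le_csSup hb h
  · rw [Real.sSup_of_not_bddAbove hb]

section Support

variable {ι : Type*} [Fintype ι]

noncomputable def supportCard (y : EuclideanSpace ℝ ι) : ℝ :=
  y.ofLp.support.ncard

theorem eventually_support_subset (x : EuclideanSpace ℝ ι) :
    ∀ᶠ y in 𝓝 x, x.ofLp.support ⊆ y.ofLp.support :=
  (eventually_all_finite (Set.toFinite _)).2 fun i hi =>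
    (EuclideanSpace.proj i).continuous.continuousAt.eventually_ne hi

theorem eventually_supportCard_le (x : EuclideanSpace ℝ ι) :
    ∀ᶠ y in 𝓝 x, supportCard x ≤ supportCard y := by
  filter_upwards [eventually_support_subset x] with y hy
  unfold supportCard
  exact_mod_cast Set.ncard_le_ncard hy

theorem inner_sub_eq_zero_of_support_subset {x y xs : EuclideanSpace ℝ ι}
    (hxs : ∀ i, x i ≠ 0 → xs i = 0) (hy : y.ofLp.support ⊆ x.ofLp.support) :
    ⟪xs, y - x⟫_ℝ = 0 := by
  rw [PiLp.inner_apply]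
  refine Finset.sum_eq_zero fun i _ => ?_
  by_cases hx : x i = 0
  · have hyi : y i = 0 := Function.notMem_support.1 fun h => hy h hx
    simp [hx, hyi]
  · simp [hxs i hx]

theorem eventually_nonneg_frechetQuotient_supportCard {x xs : EuclideanSpace ℝ ι}
    (hxs : ∀ i, x i ≠ 0 → xs i = 0) :
    ∀ᶠ y in 𝓝 x, 0 ≤ frechetQuotient supportCard x xs y := by
  have hclose : ∀ᶠ y in 𝓝 x, ‖xs‖ * ‖y - x‖ < 1 :=
    ((continuous_const.mul (continuous_id.sub continuous_const).norm).tendsto' x 0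
      (by simp)).eventually_lt_const one_pos
  filter_upwards [eventually_support_subset x, hclose] with y hsub hy
  refine div_nonneg (sub_nonneg.2 ?_) (norm_nonneg _)
  rcases hsub.eq_or_ssubset with heq | hlt
  · rw [inner_sub_eq_zero_of_support_subset hxs heq.ge, supportCard, supportCard, heq, sub_self]
  · have hjump : supportCard x + 1 ≤ supportCard y := by
      unfold supportCard
      exact_mod_cast Set.ncard_lt_ncard hlt
    linarith [real_inner_le_norm xs (y - x)]

theorem eventually_neg_norm_le_frechetQuotient_supportCard (x xs : EuclideanSpace ℝ ι) :
    ∀ᶠ y in 𝓝 x, -‖xs‖ ≤ frechetQuotient supportCard x xs y := by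
  filter_upwards [eventually_supportCard_le x] with y hy
  rcases (norm_nonneg (y - x)).eq_or_lt with h0 | hpos
  · rw [frechetQuotient, ← h0, div_zero, neg_nonpos]
    exact norm_nonneg xs
  · rw [frechetQuotient, le_div_iff₀ hpos]
    linarith [real_inner_le_norm xs (y - x)]

theorem eventually_supportCard_add_smul {x v : EuclideanSpace ℝ ι}
    (hv : v.ofLp.support ⊆ x.ofLp.support) :
    ∀ᶠ t in 𝓝 (0 : ℝ), supportCard (x + t • v) = supportCard x := by
  filter_upwards [(tendsto_add_smul_nhds x v).eventually (eventually_support_subset x)]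
    with t ht
  refine congrArg (fun s : Set ι => (s.ncard : ℝ)) (subset_antisymm (fun i hi => ?_) ht)
  by_contra hx
  have hvi : v i = 0 := Function.notMem_support.1 fun h => hx (hv h)
  simp_all

theorem liminf_frechetQuotient_supportCard_neg [DecidableEq ι] {x xs : EuclideanSpace ℝ ι}
    {i : ι} (hx : x i ≠ 0) (hxs : xs i ≠ 0) :
    liminf (frechetQuotient supportCard x xs) (𝓝[≠] x) < 0 := by
  set v := EuclideanSpace.single i (xs i)
  have hv : v ≠ 0 := by simpa [v] using hxs
  have hsupp : v.ofLp.support ⊆ x.ofLp.support := by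
    intro j hj
    obtain rfl : j = i := by by_contra hji; simp [v, hji] at hj
    exact hx
  have hslope : -⟪xs, v⟫_ℝ / ‖v‖ < 0 := by
    refine div_neg_of_neg_of_pos (neg_neg_of_pos ?_) (norm_pos_iff.2 hv)
    simpa [v, EuclideanSpace.inner_single_right] using mul_self_pos.2 hxs
  have hfreq : ∃ᶠ y in 𝓝[≠] x, frechetQuotient supportCard x xs y ≤ -⟪xs, v⟫_ℝ / ‖v‖ := by
    refine ((tendsto_add_smul_nhdsNE x hv).mono_left (nhdsGT_le_nhdsNE 0)).frequently
      (Eventually.frequently ?_)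
    filter_upwards [nhdsWithin_le_nhds (eventually_supportCard_add_smul hsupp),
      self_mem_nhdsWithin] with t ht (htpos : 0 < t)
    exact (frechetQuotient_add_smul xs htpos ht).le
  have hbdd : IsBoundedUnder (· ≥ ·) (𝓝[≠] x) (frechetQuotient supportCard x xs) :=
    ⟨-‖xs‖, nhdsWithin_le_nhds (eventually_neg_norm_le_frechetQuotient_supportCard x xs)⟩
  exact (liminf_le_of_frequently_le hfreq hbdd).trans_lt hslope

end Support

theorem frechet_eq_XIorth (n : ℕ) (x : EuclideanSpace ℝ (Fin n))
    (c : EuclideanSpace ℝ (Fin n) → ℝ)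
    (hc : ∀ y, c y = (Set.ncard {i : Fin n | y i ≠ 0} : ℝ)) :
    {xs : EuclideanSpace ℝ (Fin n) |
        0 ≤ Filter.liminf
          (fun y => (c y - c x - inner ℝ xs (y - x)) / ‖y - x‖) (𝓝[≠] x)} =
      {xs : EuclideanSpace ℝ (Fin n) | ∀ i, x i ≠ 0 → xs i = 0} := by
  obtain rfl : c = supportCard := funext hc
  ext xs
  refine ⟨fun h i hx => ?_, fun hxs => ?_⟩
  · by_contra hxs
    exact (liminf_frechetQuotient_supportCard_neg hx hxs).not_ge h
  · exact Real.liminf_nonneg_of_eventually_nonneg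
      (nhdsWithin_le_nhds (eventually_nonneg_frechetQuotient_supportCard hxs))
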